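/- Let x₁,…,x₅ ∈ SL(2,ℂ), x̌ᵢ = xᵢ - (tr(xᵢ)/2)•1, and s_{i₁⋯i_r} = -tr(x̌_{i₁}⋯x̌_{i_r}). Then for indices a₁ < a₂ < a₃ < a₄ and any c, s_{a₁c}·s_{a₂a₃a₄} - s_{a₂c}·s_{a₁a₃a₄} + s_{a₃c}·s_{a₁a₂a₄} - s_{a₄c}·s_{a₁a₂a₃} = 0. (Type II relation.) -/

import Mathlib

/-! Traceless 2 × 2 matrices form a 3-dimensional space, and the left-hand side is multilinear
and alternating in the four traceless matrices (for traceless `X, Y` one has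
`X * Y + Y * X = trace (X * Y) • 1`, so `trace (X * Y * Z)` is alternating), hence it vanishes.
In coordinates this is a polynomial identity in the entries, which is checked by expansion. -/

open Matrix

theorem Matrix.trace_sub_half_trace_smul_one {K : Type*} [Field K] [NeZero (2 : K)]
    (x : Matrix (Fin 2) (Fin 2) K) :
    trace (x - (trace x / 2) • (1 : Matrix (Fin 2) (Fin 2) K)) = 0 := by
  simp only [trace_sub, trace_smul, trace_one, Fintype.card_fin, smul_eq_mul]
  field_simp
  ring

theorem Matrix.trace_mul_alternating_sum_eq_zero_of_trace_eq_zero {R : Type*} [CommRing R]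
    {A B C D : Matrix (Fin 2) (Fin 2) R} (hA : trace A = 0) (hB : trace B = 0)
    (hC : trace C = 0) (hD : trace D = 0) (E : Matrix (Fin 2) (Fin 2) R) :
    (-(trace (A * E))) * (-(trace (B * C * D)))
      - (-(trace (B * E))) * (-(trace (A * C * D)))
      + (-(trace (C * E))) * (-(trace (A * B * D)))
      - (-(trace (D * E))) * (-(trace (A * B * C))) = 0 := by
  rw [trace_fin_two] at hA hB hC hD
  simp only [trace_fin_two, mul_apply, Fin.sum_univ_two, eq_neg_of_add_eq_zero_right hA,
    eq_neg_of_add_eq_zero_right hB, eq_neg_of_add_eq_zero_right hC,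
    eq_neg_of_add_eq_zero_right hD]
  ring

theorem stmt_9_general (x : Fin 5 → Matrix (Fin 2) (Fin 2) ℂ)
    (c : Fin 5 → Matrix (Fin 2) (Fin 2) ℂ)
    (hc : ∀ i, c i = x i - ((trace (x i)) / 2) • (1 : Matrix (Fin 2) (Fin 2) ℂ))
    (a₁ a₂ a₃ a₄ d : Fin 5) :
    (-(trace (c a₁ * c d))) * (-(trace (c a₂ * c a₃ * c a₄)))
      - (-(trace (c a₂ * c d))) * (-(trace (c a₁ * c a₃ * c a₄)))
      + (-(trace (c a₃ * c d))) * (-(trace (c a₁ * c a₂ * c a₄)))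
      - (-(trace (c a₄ * c d))) * (-(trace (c a₁ * c a₂ * c a₃))) = 0 := by
  have traceless (i : Fin 5) : trace (c i) = 0 := by
    rw [hc]
    exact trace_sub_half_trace_smul_one (x i)
  exact trace_mul_alternating_sum_eq_zero_of_trace_eq_zero (traceless a₁) (traceless a₂)
    (traceless a₃) (traceless a₄) (c d)

theorem stmt_9 (x : Fin 5 → Matrix (Fin 2) (Fin 2) ℂ)
    (hx : ∀ i, (x i).det = 1)
    (c : Fin 5 → Matrix (Fin 2) (Fin 2) ℂ)
    (hc : ∀ i, c i = x i - ((trace (x i)) / 2) • (1 : Matrix (Fin 2) (Fin 2) ℂ))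
    (a₁ a₂ a₃ a₄ d : Fin 5)
    (ha₁ : a₁ < a₂) (ha₂ : a₂ < a₃) (ha₃ : a₃ < a₄) :
    (-(trace (c a₁ * c d))) * (-(trace (c a₂ * c a₃ * c a₄)))
      - (-(trace (c a₂ * c d))) * (-(trace (c a₁ * c a₃ * c a₄)))
      + (-(trace (c a₃ * c d))) * (-(trace (c a₁ * c a₂ * c a₄)))
      - (-(trace (c a₄ * c d))) * (-(trace (c a₁ * c a₂ * c a₃))) = 0 :=
  stmt_9_general x c hc a₁ a₂ a₃ a₄ d
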